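/- Let M and N be finitely generated free ℤ-modules of the same finite rank, and let f : M → N be a ℤ-linear injection with finite cokernel of cardinality c. Then the induced map μ : (1/c)·M / M → N / cN (defined by sending the class of (1/c)·m to the class of the unique n with c·n = c·f(m), i.e. induced by f after inverting c and reducing mod c) has kernel isomorphic as an abelian group to coker f. -/

import Mathlib

/-!
This is the connecting map of the snake lemma for multiplication by `c` on
`0 → M → N → coker f → 0`. Since `c` kills `coker f`, every `c • n` lies in `f(M)`, and `f` is
injective, so `n ↦ f⁻¹(c • n)` is a homomorphism `N → M`; it sends `f(M)` into `cM` and hence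
induces `coker f → M/cM`. Its image is `ker μ`, because `f m = c • n` forces `m = f⁻¹(c • n)`, and
it is injective because `N` is torsion-free: `f⁻¹(c • n) = c • m` gives `c • n = c • f m`.
-/

open QuotientAddGroup

namespace AddMonoidHom

variable {M N : Type*} [AddCommGroup M] [AddCommGroup N]

def mapModZSMul (f : M →+ N) (c : ℤ) :
    M ⧸ (zsmulAddGroupHom (α := M) c).range →+ N ⧸ (zsmulAddGroupHom (α := N) c).range :=
  QuotientAddGroup.map _ _ f (by rintro _ ⟨m, rfl⟩; exact ⟨f m, (map_zsmul f c m).symm⟩)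

@[simp]
lemma mapModZSMul_mk (f : M →+ N) (c : ℤ) (m : M) :
    mapModZSMul f c (m : M ⧸ (zsmulAddGroupHom (α := M) c).range) = (f m : N ⧸ _) := rfl

variable {f : M →+ N} (hf : Function.Injective f) {c : ℤ} (hc : ∀ n, c • n ∈ f.range)

noncomputable def zsmulPreimage : N →+ M :=
  ((ofInjective hf).symm : f.range →+ M).comp ((zsmulAddGroupHom c).codRestrict f.range hc)

lemma apply_zsmulPreimage (n : N) : f (zsmulPreimage hf hc n) = c • n :=
  apply_ofInjective_symm hf _

lemma zsmulPreimage_apply (m : M) : zsmulPreimage hf hc (f m) = c • m :=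
  hf (by rw [apply_zsmulPreimage, map_zsmul])

noncomputable def cokerToModZSMul : N ⧸ f.range →+ M ⧸ (zsmulAddGroupHom (α := M) c).range :=
  QuotientAddGroup.lift f.range ((QuotientAddGroup.mk' _).comp (zsmulPreimage hf hc)) <| by
    rintro _ ⟨m, rfl⟩
    rw [mem_ker, comp_apply, zsmulPreimage_apply, QuotientAddGroup.mk'_apply, eq_zero_iff]
    exact ⟨m, rfl⟩

@[simp]
lemma cokerToModZSMul_mk (n : N) :
    cokerToModZSMul hf hc (n : N ⧸ f.range) = (zsmulPreimage hf hc n : M ⧸ _) := rfl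

lemma cokerToModZSMul_mem_ker (x : N ⧸ f.range) :
    cokerToModZSMul hf hc x ∈ (mapModZSMul f c).ker := by
  induction x using QuotientAddGroup.induction_on with | H n => ?_
  rw [mem_ker, cokerToModZSMul_mk, mapModZSMul_mk, apply_zsmulPreimage, eq_zero_iff]
  exact ⟨n, rfl⟩

lemma cokerToModZSMul_injective [IsAddTorsionFree N] (hc0 : c ≠ 0) :
    Function.Injective (cokerToModZSMul hf hc) := by
  rw [injective_iff_map_eq_zero]
  intro x hx
  induction x using QuotientAddGroup.induction_on with | H n => ?_
  rw [cokerToModZSMul_mk, eq_zero_iff] at hx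
  obtain ⟨m, hm⟩ := hx
  have : c • n = c • f m := by
    rw [← apply_zsmulPreimage hf hc n, ← hm, zsmulAddGroupHom_apply, map_zsmul]
  rw [eq_zero_iff, zsmul_right_injective hc0 this]
  exact ⟨m, rfl⟩

lemma exists_cokerToModZSMul_eq {y : M ⧸ (zsmulAddGroupHom (α := M) c).range}
    (hy : y ∈ (mapModZSMul f c).ker) : ∃ x, cokerToModZSMul hf hc x = y := by
  induction y using QuotientAddGroup.induction_on with | H m => ?_
  rw [mem_ker, mapModZSMul_mk, eq_zero_iff] at hy
  obtain ⟨n, hn⟩ := hy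
  refine ⟨n, ?_⟩
  rw [cokerToModZSMul_mk]
  congr 1
  exact hf (by rw [apply_zsmulPreimage, ← hn, zsmulAddGroupHom_apply])

noncomputable def kerMapModZSMulEquiv [IsAddTorsionFree N] (hc0 : c ≠ 0) :
    (mapModZSMul f c).ker ≃+ N ⧸ f.range :=
  (AddEquiv.ofBijective ((cokerToModZSMul hf hc).codRestrict _ (cokerToModZSMul_mem_ker hf hc))
    ⟨fun _ _ h => cokerToModZSMul_injective hf hc hc0 (congrArg Subtype.val h),
      fun ⟨_, hy⟩ => (exists_cokerToModZSMul_eq hf hc hy).imp fun _ h => Subtype.ext h⟩).symm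

end AddMonoidHom

/-- For `f : M → N` an injective ℤ-linear map of finite free ℤ-modules of
equal rank with finite cokernel of cardinality `c`, the kernel of the induced map
`M/cM → N/cN` is isomorphic to `coker f`. -/
theorem stmt0 {M N : Type*} [AddCommGroup M] [AddCommGroup N]
    [Module ℤ M] [Module ℤ N]
    [Module.Free ℤ N]
    (f : M →ₗ[ℤ] N) (hf : Function.Injective f)
    [Finite (N ⧸ LinearMap.range f)]
    (c : ℤ) (hc : c = Nat.card (N ⧸ LinearMap.range f)) :
    Nonempty
      ((QuotientAddGroup.map (zsmulAddGroupHom c).range (zsmulAddGroupHom c).range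
          f.toAddMonoidHom
          (by
            rintro x ⟨m, rfl⟩
            simp only [AddSubgroup.mem_comap, AddMonoidHom.mem_range]
            exact ⟨f m, by simp [zsmulAddGroupHom_apply, map_zsmul]⟩)).ker ≃+
        (N ⧸ LinearMap.range f)) := by
  have : IsAddTorsionFree N := .of_isTorsionFree ℤ N
  have hc0 : c ≠ 0 := by
    rw [hc]
    exact_mod_cast Nat.card_pos.ne'
  have hdiv (n : N) : c • n ∈ f.toAddMonoidHom.range := by
    rw [hc, natCast_zsmul]
    exact (LinearMap.range f).toAddSubgroup.nsmul_index_mem n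
  exact ⟨AddMonoidHom.kerMapModZSMulEquiv hf hdiv hc0⟩
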